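/- arXiv:1102.5266 — 5 statements merged into one kernel-verified Lean document; each statement's English description precedes it below -/
import Mathlib

section
/- Let z_1, ..., z_d be positive real numbers and y > 0 a real number with z_i > y for all i. Then the harmonic mean satisfies HM(z_1 - y, ..., z_d - y) ≥ HM(z_1, ..., z_d) - d·y, where HM(w_1,...,w_d) = d / (∑_i 1/w_i). -/
/-!
Put `S = ∑ 1 / zᵢ` and `T = ∑ 1 / (zᵢ - y)`. Termwise, `1 / (zᵢ - y) - 1 / zᵢ = y / (zᵢ (zᵢ - y))`,
and the products `1 / (zᵢ (zᵢ - y))` sum to at most `S T` since all terms are positive. Hence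
`T - S ≤ y S T`, i.e. `1 / S - 1 / T ≤ y`; multiplying by `d` gives the claim.
-/

open Finset

theorem Finset.sum_mul_le_sum_mul_sum {ι R : Type*} [CommSemiring R] [PartialOrder R]
    [IsOrderedRing R] (s : Finset ι) {f g : ι → R} (hf : ∀ i ∈ s, 0 ≤ f i)
    (hg : ∀ i ∈ s, 0 ≤ g i) : ∑ i ∈ s, f i * g i ≤ (∑ i ∈ s, f i) * ∑ i ∈ s, g i := by
  rw [sum_mul]
  exact sum_le_sum fun i hi => mul_le_mul_of_nonneg_left (single_le_sum hg hi) (hf i hi)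

theorem one_div_sub_sub_one_div {K : Type*} [Field K] {z y : K} (hz : z ≠ 0) (hzy : z - y ≠ 0) :
    1 / (z - y) - 1 / z = y * (1 / z * (1 / (z - y))) := by
  field_simp
  ring

theorem sum_one_div_sub_sub_sum_one_div_le {ι : Type*} (s : Finset ι) {z : ι → ℝ} {y : ℝ}
    (hy : 0 ≤ y) (hzy : ∀ i ∈ s, y < z i) :
    ∑ i ∈ s, 1 / (z i - y) - ∑ i ∈ s, 1 / z i
      ≤ y * ((∑ i ∈ s, 1 / z i) * ∑ i ∈ s, 1 / (z i - y)) := by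
  have hz : ∀ i ∈ s, 0 < z i := fun i hi => hy.trans_lt (hzy i hi)
  have hzy' : ∀ i ∈ s, 0 < z i - y := fun i hi => sub_pos.2 (hzy i hi)
  calc ∑ i ∈ s, 1 / (z i - y) - ∑ i ∈ s, 1 / z i
      = y * ∑ i ∈ s, 1 / z i * (1 / (z i - y)) := by
        rw [← sum_sub_distrib, mul_sum]
        exact sum_congr rfl fun i hi =>
          one_div_sub_sub_one_div (hz i hi).ne' (hzy' i hi).ne'
    _ ≤ y * ((∑ i ∈ s, 1 / z i) * ∑ i ∈ s, 1 / (z i - y)) := by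
        gcongr
        exact s.sum_mul_le_sum_mul_sum (fun i hi => (one_div_pos.2 (hz i hi)).le)
          fun i hi => (one_div_pos.2 (hzy' i hi)).le

theorem inv_sum_one_div_le_inv_sum_one_div_sub_add {ι : Type*} (s : Finset ι) {z : ι → ℝ}
    {y : ℝ} (hy : 0 ≤ y) (hzy : ∀ i ∈ s, y < z i) :
    (∑ i ∈ s, 1 / z i)⁻¹ ≤ (∑ i ∈ s, 1 / (z i - y))⁻¹ + y := by
  rcases s.eq_empty_or_nonempty with rfl | hs
  · simpa using hy
  have hS : 0 < ∑ i ∈ s, 1 / z i :=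
    sum_pos (fun i hi => one_div_pos.2 (hy.trans_lt (hzy i hi))) hs
  have hT : 0 < ∑ i ∈ s, 1 / (z i - y) :=
    sum_pos (fun i hi => one_div_pos.2 (sub_pos.2 (hzy i hi))) hs
  rw [← sub_le_iff_le_add', inv_sub_inv hS.ne' hT.ne', div_le_iff₀ (mul_pos hS hT)]
  exact sum_one_div_sub_sub_sum_one_div_le s hy hzy

theorem harmonic_mean_shift_general (d : ℕ) (z : Fin d → ℝ) (y : ℝ)
    (hy : 0 < y) (hzy : ∀ i, y < z i) :
    (d : ℝ) / (∑ i, 1 / (z i - y)) ≥ (d : ℝ) / (∑ i, 1 / z i) - d * y := by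
  have h := inv_sum_one_div_le_inv_sum_one_div_sub_add univ hy.le fun i _ => hzy i
  rw [ge_iff_le, div_eq_mul_inv, div_eq_mul_inv, ← mul_sub]
  exact mul_le_mul_of_nonneg_left (sub_le_iff_le_add.2 h) d.cast_nonneg

theorem harmonic_mean_shift (d : ℕ) (z : Fin d → ℝ) (y : ℝ)
    (hz : ∀ i, 0 < z i) (hy : 0 < y) (hzy : ∀ i, y < z i) :
    (d : ℝ) / (∑ i, 1 / (z i - y)) ≥ (d : ℝ) / (∑ i, 1 / z i) - d * y :=
  harmonic_mean_shift_general d z y hy hzy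
end

section
/- Let f be a polynomial of degree d over ℝ, J = [c,e] an interval with midpoint m = (c+e)/2 and width w = e - c, such that f(m) ≠ 0. If ∑_{j=1}^d 1/|m - α_j| ≤ 1/w, where α_1,...,α_d are the complex roots of f counted with multiplicity, then |f(m)| > ∑_{i=1}^d (|f^{(i)}(m)|/i!)·(w/2)^i. -/
open Polynomial Finset
open scoped Nat

/-! Expanding at m, f(m + t) = lc · ∏ⱼ (t + (m - αⱼ)). The Taylor coefficients |f⁽ⁱ⁾(m)|/i! are
therefore dominated by |lc| times the coefficients of ∏ⱼ (t + rⱼ), where rⱼ = |m - αⱼ|, so the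
right-hand side is at most |lc| (∏ⱼ (w/2 + rⱼ) - ∏ⱼ rⱼ). As ∑ⱼ (w/2)/rⱼ ≤ 1/2, the bound
1 + x ≤ eˣ gives ∏ⱼ (w/2 + rⱼ) ≤ e^{1/2} ∏ⱼ rⱼ < 2 ∏ⱼ rⱼ, while |f(m)| = |lc| ∏ⱼ rⱼ. -/

theorem norm_coeff_prod_X_add_C_le {R ι : Type*} [NormedCommRing R] [NormOneClass R]
    (s : Finset ι) (z : ι → R) {i : ℕ} (hi : i ≤ #s) :
    ‖(∏ j ∈ s, (X + C (z j))).coeff i‖ ≤ (∏ j ∈ s, (X + C ‖z j‖)).coeff i := by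
  rw [prod_X_add_C_coeff _ _ hi, prod_X_add_C_coeff _ _ hi]
  exact (norm_sum_le _ _).trans (sum_le_sum fun t _ => Finset.norm_prod_le _ _)

theorem sum_Icc_coeff_mul_pow {R : Type*} [CommRing R] {p : R[X]} {n : ℕ}
    (hp : p.natDegree ≤ n) (y : R) :
    ∑ i ∈ Icc 1 n, p.coeff i * y ^ i = p.eval y - p.eval 0 := by
  rw [eval_eq_sum_range' (Nat.lt_succ_of_le hp), range_eq_Ico, sum_eq_sum_Ico_succ_bot n.succ_pos,
    zero_add, Nat.succ_eq_add_one, Ico_add_one_right_eq_Icc, coeff_zero_eq_eval_zero]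
  ring

theorem taylor_C_mul_prod_X_sub_C {R ι : Type*} [CommRing R] (s : Finset ι) (a z : R)
    (α : ι → R) :
    taylor z (C a * ∏ j ∈ s, (X - C (α j))) = C a * ∏ j ∈ s, (X + C (z - α j)) := by
  simp only [taylor_apply, mul_comp, C_comp, Polynomial.prod_comp, sub_comp, X_comp, C_sub,
    add_sub_assoc]

theorem eval_iterate_derivative_eq_factorial_mul_taylor_coeff {R : Type*} [CommSemiring R]
    (f : R[X]) (z : R) (i : ℕ) :
    (derivative^[i] f).eval z = i ! * (taylor z f).coeff i := by
  rw [← factorial_smul_hasseDeriv, taylor_coeff]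
  simp [nsmul_eq_mul]

theorem prod_add_le_exp_sum_div_mul_prod {ι : Type*} (s : Finset ι) {r : ι → ℝ}
    (hr : ∀ j ∈ s, 0 < r j) {y : ℝ} (hy : 0 ≤ y) :
    ∏ j ∈ s, (y + r j) ≤ Real.exp (∑ j ∈ s, y / r j) * ∏ j ∈ s, r j := by
  rw [Real.exp_sum, ← prod_mul_distrib]
  refine prod_le_prod (fun j hj => by linarith [hr j hj]) fun j hj => ?_
  calc y + r j = (y / r j + 1) * r j := by field_simp [(hr j hj).ne']
    _ ≤ Real.exp (y / r j) * r j := by gcongr; exacts [(hr j hj).le, Real.add_one_le_exp _]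

theorem Real.exp_one_div_two_lt_two : Real.exp (1 / 2) < 2 := by
  nlinarith [Real.exp_one_lt_d9, Real.exp_pos (1 / 2), Real.exp_add (1 / 2) (1 / 2)]

theorem sum_Icc_coeff_prod_X_add_C_mul_pow_lt {ι : Type*} (s : Finset ι) {r : ι → ℝ}
    (hr : ∀ j ∈ s, 0 < r j) {y : ℝ} (hy : 0 ≤ y) (hsum : ∑ j ∈ s, y / r j ≤ 1 / 2) :
    ∑ i ∈ Icc 1 #s, (∏ j ∈ s, (X + C (r j))).coeff i * y ^ i < ∏ j ∈ s, r j := by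
  have hdeg : (∏ j ∈ s, (X + C (r j))).natDegree ≤ #s := by
    rw [natDegree_prod_of_monic _ _ fun j _ => monic_X_add_C (r j)]
    simp
  have hexp : Real.exp (∑ j ∈ s, y / r j) < 2 :=
    (Real.exp_le_exp.2 hsum).trans_lt Real.exp_one_div_two_lt_two
  have hprod := prod_add_le_exp_sum_div_mul_prod s hr hy
  have hpos : 0 < ∏ j ∈ s, r j := prod_pos hr
  rw [sum_Icc_coeff_mul_pow hdeg, eval_prod, eval_prod]
  simp only [eval_add, eval_X, eval_C, zero_add]
  nlinarith

theorem abs_iterate_derivative_eval_div_factorial {ι : Type*} [Fintype ι] (f : ℝ[X])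
    (α : ι → ℂ)
    (hroots : f.map (algebraMap ℝ ℂ) =
      C ((algebraMap ℝ ℂ) f.leadingCoeff) * ∏ j, (X - C (α j))) (m : ℝ) (i : ℕ) :
    |(derivative^[i] f).eval m| / i ! =
      |f.leadingCoeff| * ‖(∏ j, (X + C ((m : ℂ) - α j))).coeff i‖ := by
  have htaylor := congrArg (fun p => (taylor (algebraMap ℝ ℂ m) p).coeff i) hroots
  rw [← map_taylor, coeff_map, taylor_C_mul_prod_X_sub_C, coeff_C_mul] at htaylor
  simp only [Complex.coe_algebraMap] at htaylor
  rw [eval_iterate_derivative_eq_factorial_mul_taylor_coeff, abs_mul, Nat.abs_cast,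
    mul_div_cancel_left₀ _ (by positivity)]
  simpa only [norm_mul, Complex.norm_real, Real.norm_eq_abs] using congrArg norm htaylor

theorem eval_terminal_C0_general (d : ℕ) (f : Polynomial ℝ)
    (α : Fin d → ℂ)
    (hroots : f.map (algebraMap ℝ ℂ) =
      C ((algebraMap ℝ ℂ) f.leadingCoeff) * ∏ j, (X - C (α j)))
    (c e : ℝ) (hce : c < e) (m w : ℝ) (hw : w = e - c)
    (hfm : f.eval m ≠ 0)
    (hSigma : (∑ j, 1 / ‖(m : ℂ) - α j‖) ≤ 1 / w) :
    |f.eval m| >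
      ∑ i ∈ Finset.Icc 1 d,
        |(Polynomial.derivative^[i] f).eval m| / (Nat.factorial i) * (w / 2) ^ i := by
  have hcoeff := abs_iterate_derivative_eval_div_factorial f α hroots m
  have heval : |f.eval m| = |f.leadingCoeff| * ∏ j, ‖(m : ℂ) - α j‖ := by
    simpa [coeff_zero_eq_eval_zero, eval_prod, norm_prod] using hcoeff 0
  have hlc : 0 < |f.leadingCoeff| :=
    abs_pos.2 (leadingCoeff_ne_zero.2 (by rintro rfl; exact hfm eval_zero))
  have hr : ∀ j ∈ univ, 0 < ‖(m : ℂ) - α j‖ := fun j _ => by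
    refine norm_pos_iff.2 fun h => hfm ?_
    rw [← abs_eq_zero, heval, prod_eq_zero (mem_univ j) (by rw [h, norm_zero]), mul_zero]
  have hw0 : 0 < w := by linarith
  have hsum : ∑ j, w / 2 / ‖(m : ℂ) - α j‖ ≤ 1 / 2 :=
    calc ∑ j, w / 2 / ‖(m : ℂ) - α j‖ = w / 2 * ∑ j, 1 / ‖(m : ℂ) - α j‖ := by
          simp only [mul_sum, mul_one_div]
      _ ≤ w / 2 * (1 / w) := by gcongr
      _ = 1 / 2 := by field_simp
  calc ∑ i ∈ Icc 1 d, |(derivative^[i] f).eval m| / i ! * (w / 2) ^ i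
      ≤ ∑ i ∈ Icc 1 d,
          |f.leadingCoeff| * ((∏ j, (X + C ‖(m : ℂ) - α j‖)).coeff i * (w / 2) ^ i) := by
        refine sum_le_sum fun i hi => ?_
        rw [hcoeff, mul_assoc]
        gcongr
        exact norm_coeff_prod_X_add_C_le _ _ ((mem_Icc.1 hi).2.trans_eq (Finset.card_fin d).symm)
    _ < |f.leadingCoeff| * ∏ j, ‖(m : ℂ) - α j‖ := by
        rw [← mul_sum]
        gcongr
        simpa only [Finset.card_fin] using
          sum_Icc_coeff_prod_X_add_C_mul_pow_lt _ hr (by positivity) hsum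
    _ = |f.eval m| := heval.symm

theorem eval_terminal_C0 (d : ℕ) (f : Polynomial ℝ) (hdeg : f.natDegree = d)
    (α : Fin d → ℂ)
    (hroots : f.map (algebraMap ℝ ℂ) =
      C ((algebraMap ℝ ℂ) f.leadingCoeff) * ∏ j, (X - C (α j)))
    (c e : ℝ) (hce : c < e) (m w : ℝ) (hm : m = (c + e) / 2) (hw : w = e - c)
    (hfm : f.eval m ≠ 0)
    (hSigma : (∑ j, 1 / ‖(m : ℂ) - α j‖) ≤ 1 / w) :
    |f.eval m| >
      ∑ i ∈ Finset.Icc 1 d,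
        |(Polynomial.derivative^[i] f).eval m| / (Nat.factorial i) * (w / 2) ^ i :=
  eval_terminal_C0_general d f α hroots c e hce m w hw hfm hSigma
end

section
/- Let I be a compact interval and F : I → ℝ a strictly positive function. Suppose P is a finite partition of I into intervals such that every J ∈ P with #P > 1 satisfies w(J) ≥ F(c)/2 for all c ∈ J, where w(J) denotes the width of J. If F is integrable on I, then the number of intervals in P satisfies #P ≤ max{1, ∫_I 2/F(x) dx}. -/
/-!
If `P` has more than one interval, every `J ∈ P` has width at least `F c / 2` for each `c ∈ J`,
so `2 / F ≥ 1 / w(J)` on `J` and `∫_J 2 / F ≥ 1`. The interiors of the intervals are disjoint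
subsets of `I` and `2 / F ≥ 0`, so summing over `P` gives `#P ≤ ∫_I 2 / F`.
-/

open MeasureTheory

theorem MeasureTheory.sum_setIntegral_le_setIntegral_of_pairwiseDisjoint
    {ι α : Type*} [MeasurableSpace α] {μ : Measure α} {f : α → ℝ} {s : Set α} {t : ι → Set α}
    (P : Finset ι) (ht : ∀ i ∈ P, MeasurableSet (t i)) (hts : ∀ i ∈ P, t i ⊆ s)
    (hdisj : (P : Set ι).PairwiseDisjoint t) (hf : IntegrableOn f s μ)
    (hf0 : 0 ≤ᵐ[μ.restrict s] f) :
    ∑ i ∈ P, ∫ x in t i, f x ∂μ ≤ ∫ x in s, f x ∂μ := by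
  rw [← integral_biUnion_finset P ht hdisj fun i hi => hf.mono_set (hts i hi)]
  exact setIntegral_mono_set hf hf0 (Filter.Eventually.of_forall (Set.iUnion₂_subset hts))

theorem one_le_setIntegral_Ioo_two_div {F : ℝ → ℝ} {c d : ℝ} (hcd : c < d)
    (hF : ∀ x ∈ Set.Ioo c d, 0 < F x) (hwidth : ∀ x ∈ Set.Ioo c d, F x / 2 ≤ d - c)
    (hint : IntegrableOn (fun x => 2 / F x) (Set.Ioo c d)) :
    1 ≤ ∫ x in Set.Ioo c d, 2 / F x := by
  have hinv_le : ∀ x ∈ Set.Ioo c d, (d - c)⁻¹ ≤ 2 / F x := fun x hx => by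
    rw [← inv_div]
    exact inv_anti₀ (half_pos (hF x hx)) (hwidth x hx)
  calc (1 : ℝ) = ∫ _ in Set.Ioo c d, (d - c)⁻¹ := by
        rw [setIntegral_const, Real.volume_real_Ioo_of_le hcd.le, smul_eq_mul,
          mul_inv_cancel₀ (sub_pos.mpr hcd).ne']
    _ ≤ ∫ x in Set.Ioo c d, 2 / F x :=
        setIntegral_mono_on (integrableOn_const measure_Ioo_lt_top.ne) hint measurableSet_Ioo
          hinv_le

theorem bisection_partition_card_le_general (a b : ℝ)
    (F : ℝ → ℝ) (hF : ∀ x ∈ Set.Icc a b, 0 < F x)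
    (P : Finset (ℝ × ℝ))
    (hP : ∀ J ∈ P, J.1 < J.2)
    (hdisj : ∀ J ∈ P, ∀ K ∈ P, J ≠ K → Set.Ioo J.1 J.2 ∩ Set.Ioo K.1 K.2 = ∅)
    (hcover : (⋃ J ∈ P, Set.Icc J.1 J.2) = Set.Icc a b)
    (hstop : 1 < P.card → ∀ J ∈ P, ∀ c ∈ Set.Icc J.1 J.2, F c / 2 ≤ J.2 - J.1)
    (hint : IntegrableOn (fun x => 2 / F x) (Set.Icc a b)) :
    (P.card : ℝ) ≤ max 1 (∫ x in Set.Icc a b, 2 / F x) := by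
  rcases le_or_gt P.card 1 with hcard | hcard
  · exact le_max_of_le_left (by exact_mod_cast hcard)
  have hsub : ∀ J ∈ P, Set.Ioo J.1 J.2 ⊆ Set.Icc a b := fun J hJ x hx => by
    rw [← hcover]
    exact Set.mem_biUnion hJ (Set.Ioo_subset_Icc_self hx)
  have hone : ∀ J ∈ P, (1 : ℝ) ≤ ∫ x in Set.Ioo J.1 J.2, 2 / F x := fun J hJ =>
    one_le_setIntegral_Ioo_two_div (hP J hJ) (fun x hx => hF x (hsub J hJ hx))
      (fun x hx => hstop hcard J hJ x (Set.Ioo_subset_Icc_self hx)) (hint.mono_set (hsub J hJ))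
  have hnonneg : 0 ≤ᵐ[volume.restrict (Set.Icc a b)] fun x => 2 / F x := by
    filter_upwards [ae_restrict_mem measurableSet_Icc] with x hx
    exact (div_pos two_pos (hF x hx)).le
  calc (P.card : ℝ) = ∑ _J ∈ P, (1 : ℝ) := by simp
    _ ≤ ∑ J ∈ P, ∫ x in Set.Ioo J.1 J.2, 2 / F x := Finset.sum_le_sum hone
    _ ≤ ∫ x in Set.Icc a b, 2 / F x :=
        sum_setIntegral_le_setIntegral_of_pairwiseDisjoint P (fun _ _ => measurableSet_Ioo) hsub
          (fun J hJ K hK hne => Set.disjoint_iff_inter_eq_empty.mpr (hdisj J hJ K hK hne))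
          hint hnonneg
    _ ≤ _ := le_max_right _ _

theorem bisection_partition_card_le (a b : ℝ) (hab : a ≤ b)
    (F : ℝ → ℝ) (hF : ∀ x ∈ Set.Icc a b, 0 < F x)
    (P : Finset (ℝ × ℝ))
    (hP : ∀ J ∈ P, J.1 < J.2)
    (hdisj : ∀ J ∈ P, ∀ K ∈ P, J ≠ K → Set.Ioo J.1 J.2 ∩ Set.Ioo K.1 K.2 = ∅)
    (hcover : (⋃ J ∈ P, Set.Icc J.1 J.2) = Set.Icc a b)
    (hstop : 1 < P.card → ∀ J ∈ P, ∀ c ∈ Set.Icc J.1 J.2, F c / 2 ≤ J.2 - J.1)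
    (hint : IntegrableOn (fun x => 2 / F x) (Set.Icc a b)) :
    (P.card : ℝ) ≤ max 1 (∫ x in Set.Icc a b, 2 / F x) :=
  bisection_partition_card_le_general a b F hF P hP hdisj hcover hstop hint
end

section
/- Let f be a polynomial over ℂ of degree d with coefficients a_0, ..., a_d. Then the Mahler measure satisfies M(f) ≤ ‖f‖_2, where ‖f‖_2 = (∑_{i=0}^d |a_i|²)^{1/2}. -/
open Polynomial

/-- The Mahler measure of a complex polynomial. -/
noncomputable def mahlerMeasure (p : Polynomial ℂ) : ℝ :=
  ‖p.leadingCoeff‖ * ((p.roots.map (fun z => max 1 ‖z‖)).prod)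

/-- Mathlib's `Polynomial.mahlerMeasure` is defined analytically, as `exp` of the circle average of
`log ‖p‖`; Jensen's formula identifies it with the root product. -/
theorem mahlerMeasure_eq_polynomial_mahlerMeasure (p : ℂ[X]) :
    _root_.mahlerMeasure p = p.mahlerMeasure :=
  (p.mahlerMeasure_eq_leadingCoeff_mul_prod_roots).symm

theorem sum_support_sq_norm_coeff_eq_sum_range {R : Type*} [SeminormedRing R] (p : R[X])
    {n : ℕ} (hn : p.natDegree < n) :
    ∑ i ∈ p.support, ‖p.coeff i‖ ^ 2 = ∑ i ∈ Finset.range n, ‖p.coeff i‖ ^ 2 := by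
  refine Finset.sum_subset (fun i hi => ?_) (fun i _ hi => ?_)
  · exact Finset.mem_range.mpr ((le_natDegree_of_mem_supp i hi).trans_lt hn)
  · simp [notMem_support_iff.mp hi]

/-- Landau's inequality: the Mahler measure is bounded by the 2-norm of the coefficients. -/
theorem mahlerMeasure_le_norm2 (d : ℕ) (f : Polynomial ℂ) (hdeg : f.natDegree = d) :
    _root_.mahlerMeasure f ≤ Real.sqrt (∑ i ∈ Finset.range (d + 1), ‖f.coeff i‖ ^ 2) := by
  rw [mahlerMeasure_eq_polynomial_mahlerMeasure,
    ← sum_support_sq_norm_coeff_eq_sum_range f (by omega)]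
  exact f.mahlerMeasure_le_sqrt_sum_sq_norm_coeff
end

section
/- Let α_1, ..., α_d be the roots (with multiplicity) of a degree-d polynomial g over ℂ, let x ∈ ℝ with g(x) ≠ 0, and suppose m ∈ ℝ satisfies |x - m| ≤ w/2 where w ≤ 2/(3·Σ_g(x)) and Σ_g(x) = ∑_j 1/|x - α_j|. Then g(m) ≠ 0 and Σ_g(m) ≤ 1/w, i.e., w ≤ 1/Σ_g(m). -/
/-!
Write `Σ(z) = ∑ⱼ 1 / |z - αⱼ|`. Each term is at most `Σ(x)`, so every root is at distance at least
`1 / Σ(x) ≥ 3w/2` from `x`; moving from `x` to `m` by at most `w/2` therefore shrinks each distance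
by a factor of at most `2/3`. Hence no root lies at `m`, and `Σ(m) ≤ (3/2) Σ(x) ≤ 1/w`.
-/

open Polynomial

theorem Polynomial.eval_C_mul_prod_X_sub_C_ne_zero_iff {R ι : Type*} [CommRing R] [IsDomain R]
    [Fintype ι] (c : R) (α : ι → R) (z : R) :
    (C c * ∏ j, (X - C (α j))).eval z ≠ 0 ↔ c ≠ 0 ∧ ∀ j, z ≠ α j := by
  simp [eval_prod, Finset.prod_ne_zero_iff, sub_ne_zero]

section InvDistSum

variable {P ι : Type*} [PseudoMetricSpace P] [Fintype ι] (α : ι → P)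

/-- `Σ_g(z)` when `α` lists the roots of `g`. -/
noncomputable def invDistSum (z : P) : ℝ := ∑ j, 1 / dist z (α j)

variable {α}

theorem one_div_dist_le_invDistSum (z : P) (j : ι) : 1 / dist z (α j) ≤ invDistSum α z :=
  Finset.single_le_sum (f := fun i => 1 / dist z (α i)) (fun _ _ => by positivity)
    (Finset.mem_univ j)

theorem one_div_invDistSum_le_dist {z : P} {j : ι} (hzj : 0 < dist z (α j)) :
    1 / invDistSum α z ≤ dist z (α j) := by
  have hle := one_div_dist_le_invDistSum (α := α) z j
  exact (one_div_le (by linarith [one_div_pos.2 hzj]) hzj).2 hle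

theorem two_thirds_mul_dist_le_dist {x m : P} {w : ℝ} {j : ι} (hxj : 0 < dist x (α j))
    (hxm : dist x m ≤ w / 2) (hws : w ≤ 2 / (3 * invDistSum α x)) :
    2 / 3 * dist x (α j) ≤ dist m (α j) := by
  have hfar : w ≤ 2 / 3 * dist x (α j) := by
    calc w ≤ 2 / (3 * invDistSum α x) := hws
      _ = 2 / 3 * (1 / invDistSum α x) := by ring
      _ ≤ 2 / 3 * dist x (α j) := by gcongr; exact one_div_invDistSum_le_dist hxj
  linarith [dist_triangle x m (α j)]

theorem invDistSum_le_one_div {x m : P} {w : ℝ} (hw : 0 < w) (hxα : ∀ j, 0 < dist x (α j))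
    (hxm : dist x m ≤ w / 2) (hws : w ≤ 2 / (3 * invDistSum α x)) :
    invDistSum α m ≤ 1 / w := by
  calc invDistSum α m ≤ ∑ j, 3 / 2 * (1 / dist x (α j)) := by
        refine Finset.sum_le_sum fun j _ => ?_
        calc 1 / dist m (α j) ≤ 1 / (2 / 3 * dist x (α j)) :=
              one_div_le_one_div_of_le (by linarith [hxα j])
                (two_thirds_mul_dist_le_dist (hxα j) hxm hws)
          _ = 3 / 2 * (1 / dist x (α j)) := by field_simp
    _ = 1 / (2 / (3 * invDistSum α x)) := by rw [← Finset.mul_sum, one_div_div, invDistSum]; ring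
    _ ≤ 1 / w := one_div_le_one_div_of_le hw hws

end InvDistSum

theorem stopping_function_sigma_general (d : ℕ) (g : Polynomial ℂ) (α : Fin d → ℂ)
    (hg : g = C g.leadingCoeff * ∏ j, (X - C (α j)))
    (x m w : ℝ) (hx : g.eval (x : ℂ) ≠ 0) (hw : 0 < w)
    (hxm : |x - m| ≤ w / 2)
    (hws : w ≤ 2 / (3 * ∑ j, 1 / ‖(x : ℂ) - α j‖)) :
    g.eval (m : ℂ) ≠ 0 ∧ (∑ j, 1 / ‖(m : ℂ) - α j‖) ≤ 1 / w := by
  have hsum (z : ℂ) : ∑ j, 1 / ‖z - α j‖ = invDistSum α z := by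
    simp only [invDistSum, dist_eq_norm]
  rw [hg, eval_C_mul_prod_X_sub_C_ne_zero_iff] at hx ⊢
  rw [hsum] at hws ⊢
  have hxα (j : Fin d) : 0 < dist (x : ℂ) (α j) := dist_pos.2 (hx.2 j)
  have hxm' : dist (x : ℂ) m ≤ w / 2 := by
    rwa [Complex.isometry_ofReal.dist_eq, Real.dist_eq]
  refine ⟨⟨hx.1, fun j => dist_pos.1 ?_⟩, invDistSum_le_one_div hw hxα hxm' hws⟩
  linarith [two_thirds_mul_dist_le_dist (hxα j) hxm' hws, hxα j]

theorem stopping_function_sigma (d : ℕ) (g : Polynomial ℂ) (α : Fin d → ℂ)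
    (hg : g = C g.leadingCoeff * ∏ j, (X - C (α j))) (hlead : g.leadingCoeff ≠ 0)
    (x m w : ℝ) (hx : g.eval (x : ℂ) ≠ 0) (hw : 0 < w)
    (hxm : |x - m| ≤ w / 2)
    (hws : w ≤ 2 / (3 * ∑ j, 1 / ‖(x : ℂ) - α j‖)) :
    g.eval (m : ℂ) ≠ 0 ∧ (∑ j, 1 / ‖(m : ℂ) - α j‖) ≤ 1 / w :=
  stopping_function_sigma_general d g α hg x m w hx hw hxm hws
end
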